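/- Let X ⊆ D and suppose M|_{X×X} is symmetric, not pure, no row of M|_{X×X} contains both a 0 and a 1, and there is no length-2 derectangularising sequence among subsets of X (i.e., for all A, B ⊆ X with M|_{A×B}, M|_{A×A}, M|_{B×B} pure, the relation H^M_{A,B} is rectangular). Let X_0 be the set of rows of M|_{X×X} containing a 0 and X_1 = X \ X_0. Then every diagonal entry M_{d,d} for d ∈ X is 0 or 1 (i.e., M|_{X×X} has no * on its diagonal). -/

import Mathlib

inductive Entry | zero | one | star
deriving DecidableEq

def Rectangular {α β : Type*} (R : Set (α × β)) : Prop :=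
  ∀ i j i' j', (i, i') ∈ R → (i, j') ∈ R → (j, i') ∈ R → (j, j') ∈ R

def H {D : Type*} (M : D → D → Entry) (X Y : Set D) : Set (D × D) :=
  {p | p.1 ∈ X ∧ p.2 ∈ Y ∧ M p.1 p.2 = Entry.star}

def MatPure {D : Type*} (M : D → D → Entry) (X Y : Set D) : Prop :=
  (∀ i ∈ X, ∀ j ∈ Y, M i j ≠ Entry.zero) ∨ (∀ i ∈ X, ∀ j ∈ Y, M i j ≠ Entry.one)

/-!
Suppose `M d d = *` for some `d ∈ X`. Since no row mixes `0` and `1`, the row of `d` avoids one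
of the two values, say `u`; since `M|_{X×X}` is not pure, some entry `M a b` equals `u`. The rows
of `a` and `b` contain `u`, so they avoid the opposite value `ū`, and by symmetry `M d a` and
`M d b` are neither `u` nor `ū`, i.e. both are `*`. Hence `M` has no `ū` on `{d, a, b}²`, which
makes `H_{{d,a},{d,b}}` rectangular; but it contains `(d, d)`, `(d, b)`, `(a, d)` and not `(a, b)`.
-/

namespace Entry

def opp : Entry → Entry
  | zero => one
  | one => zero
  | star => star

theorem opp_ne_star {u : Entry} (hu : u ≠ star) : u.opp ≠ star := by
  cases u <;> simp_all [opp]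

theorem eq_star_of_ne_of_ne_opp {u e : Entry} (hu : u ≠ star) (h : e ≠ u) (h' : e ≠ u.opp) :
    e = star := by
  cases u <;> cases e <;> simp_all [opp]

end Entry

open Entry

variable {D : Type*} {M : D → D → Entry}

theorem MatPure.mono {A B A' B' : Set D} (h : MatPure M A B) (hA : A' ⊆ A) (hB : B' ⊆ B) :
    MatPure M A' B' :=
  h.imp (fun h i hi j hj => h i (hA hi) j (hB hj)) (fun h i hi j hj => h i (hA hi) j (hB hj))

theorem matPure_of_forall_ne {A B : Set D} {v : Entry} (hv : v ≠ star)
    (h : ∀ i ∈ A, ∀ j ∈ B, M i j ≠ v) : MatPure M A B := by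
  cases v
  · exact Or.inl h
  · exact Or.inr h
  · exact absurd rfl hv

theorem exists_eq_of_not_matPure {A B : Set D} (h : ¬ MatPure M A B) {u : Entry} (hu : u ≠ star) :
    ∃ a ∈ A, ∃ b ∈ B, M a b = u := by
  by_contra! h'
  exact h (matPure_of_forall_ne hu h')

section Rows

variable {X : Set D}

theorem row_ne_opp_of_eq
    (hrow : ∀ i ∈ X, ¬ ((∃ j ∈ X, M i j = zero) ∧ (∃ j ∈ X, M i j = one)))
    {u : Entry} (hu : u ≠ star) {i j : D} (hi : i ∈ X) (hj : j ∈ X) (hij : M i j = u) :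
    ∀ k ∈ X, M i k ≠ u.opp := by
  intro k hk hik
  cases u
  · exact hrow i hi ⟨⟨j, hj, hij⟩, k, hk, hik⟩
  · exact hrow i hi ⟨⟨k, hk, hik⟩, j, hj, hij⟩
  · exact hu rfl

theorem eq_star_of_rows_ne (hsym : ∀ i ∈ X, ∀ j ∈ X, M i j = M j i) {u : Entry} (hu : u ≠ star)
    {d a : D} (hd : d ∈ X) (ha : a ∈ X) (hdu : ∀ j ∈ X, M d j ≠ u)
    (hau : ∀ j ∈ X, M a j ≠ u.opp) : M d a = star :=
  eq_star_of_ne_of_ne_opp hu (hdu a ha) (hsym d hd a ha ▸ hau d hd)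

theorem false_of_star_of_row_ne (hsym : ∀ i ∈ X, ∀ j ∈ X, M i j = M j i)
    (hrow : ∀ i ∈ X, ¬ ((∃ j ∈ X, M i j = zero) ∧ (∃ j ∈ X, M i j = one)))
    (hrect : ∀ A B : Set D, A ⊆ X → B ⊆ X → MatPure M A B → MatPure M A A →
      MatPure M B B → Rectangular (H M A B))
    {u : Entry} (hu : u ≠ star) {d a b : D} (hd : d ∈ X) (ha : a ∈ X) (hb : b ∈ X)
    (hdd : M d d = star) (hdu : ∀ j ∈ X, M d j ≠ u) (hab : M a b = u) : False := by
  have hau := row_ne_opp_of_eq hrow hu ha hb hab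
  have hbu := row_ne_opp_of_eq hrow hu hb ha ((hsym b hb a ha).trans hab)
  have hda := eq_star_of_rows_ne hsym hu hd ha hdu hau
  have hdb := eq_star_of_rows_ne hsym hu hd hb hdu hbu
  have hS : ({d, a, b} : Set D) ⊆ X := by
    simp only [Set.insert_subset_iff, Set.singleton_subset_iff]
    exact ⟨hd, ha, hb⟩
  have hpure : MatPure M {d, a, b} {d, a, b} := by
    refine matPure_of_forall_ne (opp_ne_star hu) fun i hi j hj => ?_
    rcases hi with rfl | rfl | rfl
    · have hij : M i j = star := by rcases hj with rfl | rfl | rfl <;> assumption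
      exact hij ▸ (opp_ne_star hu).symm
    · exact hau j (hS hj)
    · exact hbu j (hS hj)
  have hA : ({d, a} : Set D) ⊆ {d, a, b} := Set.insert_subset_insert (by simp)
  have hB : ({d, b} : Set D) ⊆ {d, a, b} := Set.insert_subset_insert (by simp)
  have hR := hrect _ _ (hA.trans hS) (hB.trans hS) (hpure.mono hA hB) (hpure.mono hA hA)
    (hpure.mono hB hB)
  have hab_star : M a b = star :=
    (hR d a d b ⟨by simp, by simp, hdd⟩ ⟨by simp, by simp, hdb⟩
      ⟨by simp, by simp, hsym a ha d hd ▸ hda⟩).2.2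
  exact hu (hab.symm.trans hab_star)

end Rows

theorem no_star_on_diagonal_general {D : Type} (M : D → D → Entry) (X : Set D)
    (hsym : ∀ i ∈ X, ∀ j ∈ X, M i j = M j i)
    (hnp : ¬ MatPure M X X)
    (hrow : ∀ i ∈ X, ¬ ((∃ j ∈ X, M i j = Entry.zero) ∧ (∃ j ∈ X, M i j = Entry.one)))
    (hrect : ∀ A B : Set D, A ⊆ X → B ⊆ X → MatPure M A B → MatPure M A A →
      MatPure M B B → Rectangular (H M A B)) :
    ∀ d ∈ X, M d d = Entry.zero ∨ M d d = Entry.one := by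
  intro d hd
  by_contra hdd
  replace hdd : M d d = star := by cases h : M d d <;> simp_all
  obtain ⟨u, hu, hdu⟩ : ∃ u ≠ star, ∀ j ∈ X, M d j ≠ u := by
    by_cases h0 : ∃ j ∈ X, M d j = zero
    · obtain ⟨j, hj, hdj⟩ := h0
      exact ⟨zero.opp, by decide, row_ne_opp_of_eq hrow (by decide) hd hj hdj⟩
    · exact ⟨zero, by decide, fun j hj hdj => h0 ⟨j, hj, hdj⟩⟩
  obtain ⟨a, ha, b, hb, hab⟩ := exists_eq_of_not_matPure hnp hu
  exact false_of_star_of_row_ne hsym hrow hrect hu hd ha hb hdd hdu hab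

theorem no_star_on_diagonal {D : Type} [Fintype D] (M : D → D → Entry) (X : Set D)
    (hsym : ∀ i ∈ X, ∀ j ∈ X, M i j = M j i)
    (hnp : ¬ MatPure M X X)
    (hrow : ∀ i ∈ X, ¬ ((∃ j ∈ X, M i j = Entry.zero) ∧ (∃ j ∈ X, M i j = Entry.one)))
    (hrect : ∀ A B : Set D, A ⊆ X → B ⊆ X → MatPure M A B → MatPure M A A →
      MatPure M B B → Rectangular (H M A B)) :
    ∀ d ∈ X, M d d = Entry.zero ∨ M d d = Entry.one :=
  no_star_on_diagonal_general M X hsym hnp hrow hrect
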